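/- Consider n parking spots 1, …, n on a one-way street and n cars entering in order 1, …, n, where car i has preference a_i ∈ [n]: car i parks at the smallest unoccupied spot j with j ≥ a_i, and the process fails if every spot j ≥ a_i is occupied when car i arrives. Then all n cars park successfully if and only if the nondecreasing rearrangement b_1 ≤ b_2 ≤ ⋯ ≤ b_n of (a_1, …, a_n) satisfies b_i ≤ i for all i in [n]. -/

import Mathlib

/-- `parkSucceeds n prefs occ` : with spots `1, …, n` and the spots in `occ` already
occupied, the cars with preference list `prefs` all park successfully, where each car
in turn parks at the smallest unoccupied spot `j` with `j ≥` its preference (and the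
process fails if no such spot exists). -/
def parkSucceeds (n : ℕ) : List ℕ → Finset ℕ → Prop
  | [], _ => True
  | p :: rest, occ =>
      ∃ j ∈ Finset.Icc p n, j ∉ occ ∧ (∀ k ∈ Finset.Icc p n, k ∉ occ → j ≤ k) ∧
        parkSucceeds n rest (insert j occ)


/-!
Parking succeeds from a configuration `occ` exactly when, for every threshold `p`, the cars
still to come with preference `≥ p` are no more than the free spots `≥ p`. This counting
condition is preserved car by car: the arriving car takes a spot `j ≥ a`, and the only
thresholds that could fail, `a < p ≤ j`, see the same free spots as `a`, because every spot
in `[a, j)` is occupied. For the sorted preferences `b`, the counting condition says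
`#{i | p ≤ b i} ≤ n + 1 - p`, which by monotonicity is `b i ≤ i + 1`.
-/

open Finset

lemma card_Icc_sdiff_insert_add_one {n p j : ℕ} {occ : Finset ℕ} (hpj : p ≤ j) (hjn : j ≤ n)
    (hj : j ∉ occ) : #(Icc p n \ insert j occ) + 1 = #(Icc p n \ occ) := by
  rw [sdiff_insert, card_erase_add_one (by simp [*])]

lemma Icc_sdiff_insert_of_lt {n p j : ℕ} {occ : Finset ℕ} (hj : j < p) :
    Icc p n \ insert j occ = Icc p n \ occ := by
  rw [sdiff_insert, erase_eq_of_notMem (by simp; omega)]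

lemma Icc_sdiff_eq_of_le_forall_mem {n a p : ℕ} {occ : Finset ℕ} (hap : a ≤ p)
    (h : ∀ k ∈ Icc a n \ occ, p ≤ k) : Icc p n \ occ = Icc a n \ occ := by
  ext k
  simp only [mem_sdiff, mem_Icc]
  constructor
  · rintro ⟨⟨hpk, hkn⟩, hk⟩
    exact ⟨⟨hap.trans hpk, hkn⟩, hk⟩
  · rintro ⟨⟨hak, hkn⟩, hk⟩
    exact ⟨⟨h k (by simp [*]), hkn⟩, hk⟩

theorem parkSucceeds_iff_forall_countP_le (n : ℕ) :
    ∀ (l : List ℕ) (occ : Finset ℕ),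
      parkSucceeds n l occ ↔ ∀ p, l.countP (p ≤ ·) ≤ #(Icc p n \ occ)
  | [], occ => by simp [parkSucceeds]
  | a :: l, occ => by
    simp only [parkSucceeds, parkSucceeds_iff_forall_countP_le n l, List.countP_cons,
      decide_eq_true_eq]
    constructor
    · rintro ⟨j, hja, hjocc, -, hl⟩ p
      have hl := hl p
      rcases lt_or_ge j p with hjp | hpj
      · rw [Icc_sdiff_insert_of_lt hjp] at hl
        simp [(mem_Icc.1 hja).1.trans_lt hjp |>.not_ge, hl]
      · have := card_Icc_sdiff_insert_add_one hpj (mem_Icc.1 hja).2 hjocc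
        split_ifs <;> omega
    · intro h
      have ha := h a
      simp only [le_refl, if_true] at ha
      have hne : (Icc a n \ occ).Nonempty := card_pos.1 (by omega)
      set j := (Icc a n \ occ).min' hne
      have hj := mem_sdiff.1 ((Icc a n \ occ).min'_mem hne)
      refine ⟨j, hj.1, hj.2, fun k hk hko => min'_le _ _ (mem_sdiff.2 ⟨hk, hko⟩), fun p => ?_⟩
      have hp := h p
      rcases lt_or_ge j p with hjp | hpj
      · rw [Icc_sdiff_insert_of_lt hjp]
        omega
      have hjp := card_Icc_sdiff_insert_add_one hpj (mem_Icc.1 hj.1).2 hj.2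
      rcases le_or_gt p a with hpa | hap
      · simp only [hpa, if_true] at hp
        omega
      have hmono : l.countP (p ≤ ·) ≤ l.countP (a ≤ ·) :=
        List.countP_mono_left fun x _ hx => by simp only [decide_eq_true_eq] at hx ⊢; omega
      rw [Icc_sdiff_eq_of_le_forall_mem hap.le fun k hk => hpj.trans (min'_le _ _ hk)] at hjp
      omega

lemma List.countP_ofFn {α : Type*} {n : ℕ} (f : Fin n → α) (P : α → Prop) [DecidablePred P] :
    (List.ofFn f).countP P = #{i | P (f i)} := by
  rw [← Multiset.coe_countP, ← Fin.univ_val_map, Multiset.countP_map]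
  rfl

lemma Monotone.forall_le_val_add_one_iff {n : ℕ} {b : Fin n → ℕ} (hb : Monotone b) :
    (∀ i : Fin n, b i ≤ i + 1) ↔ ∀ p, #{i | p ≤ b i} ≤ n + 1 - p := by
  constructor
  · intro h p
    calc #{i | p ≤ b i} ≤ #(Ico (p - 1) n) :=
          card_le_card_of_injOn Fin.val (fun i hi => by have := h i; simp at hi ⊢; omega)
            Fin.val_injective.injOn
      _ ≤ n + 1 - p := by rw [Nat.card_Ico]; omega
  · intro h i
    by_contra! hi
    have hsub : Ici i ⊆ ({j | i + 2 ≤ b j} : Finset (Fin n)) := fun j hj => by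
      simp only [mem_filter_univ]
      exact hi.trans_le (hb (mem_Ici.1 hj))
    have := (card_le_card hsub).trans (h (i + 2))
    rw [Fin.card_Ici] at this
    omega

theorem parking_success_iff_general (n : ℕ) (a : Fin n → ℕ) :
    parkSucceeds n (List.ofFn a) ∅ ↔
      ∃ e : Equiv.Perm (Fin n), (Monotone fun i => a (e i)) ∧
        ∀ i : Fin n, a (e i) ≤ (i : ℕ) + 1 := by
  have card_comp (e : Equiv.Perm (Fin n)) (p : ℕ) : #{i | p ≤ a (e i)} = #{i | p ≤ a i} :=
    card_equiv e (by simp)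
  simp only [parkSucceeds_iff_forall_countP_le, sdiff_empty, Nat.card_Icc, List.countP_ofFn]
  constructor
  · intro h
    refine ⟨Tuple.sort a, Tuple.monotone_sort a,
      (Tuple.monotone_sort a).forall_le_val_add_one_iff.2 fun p =>
        (card_comp _ p).trans_le (h p)⟩
  · rintro ⟨e, he, hle⟩ p
    rw [← card_comp e]
    exact he.forall_le_val_add_one_iff.1 hle p

/-- With `n` parking spots `1, …, n` on a one-way street and `n` cars entering in
order, where car `i` has preference `a i ∈ [n]` and parks at the smallest unoccupied
spot `j ≥ a i` (failing if all such spots are occupied), all `n` cars park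
successfully if and only if the nondecreasing rearrangement `b_1 ≤ ⋯ ≤ b_n` of
`(a_1, …, a_n)` satisfies `b_i ≤ i` for every `i`. -/
theorem parking_success_iff (n : ℕ) (a : Fin n → ℕ) (ha : ∀ i, a i ∈ Finset.Icc 1 n) :
    parkSucceeds n (List.ofFn a) ∅ ↔
      ∃ e : Equiv.Perm (Fin n), (Monotone fun i => a (e i)) ∧
        ∀ i : Fin n, a (e i) ≤ (i : ℕ) + 1 :=
  parking_success_iff_general n a
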